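/- Let θ ∈ (0,1) and 0 < ν < 1. There exists a constant C = C(ν, θ) such that for all u, v ∈ ℝ³ with |u| ≤ ν and |v| ≤ ν, every σ > 0, and each component index l ∈ {1,2,3}, the function φ(s) := ∫_{A(σ, s^{−θ})} (Σ_v(k))_l · cos(k·u s − |k| s) dk is differentiable at every s ≥ 1 with σ < s^{−θ}, and satisfies |φ'(s)| ≤ C s^{−(1+θ)} there. -/

import Mathlib

open MeasureTheory
open scoped RealInnerProductSpace

noncomputable section

/-- ℝ³ as a Euclidean space. -/
abbrev E3 := EuclideanSpace ℝ (Fin 3)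

/-- The closed annulus `{k : a ≤ |k| ≤ b}` in ℝ³. -/
def annulus (a b : ℝ) : Set E3 := {k | a ≤ ‖k‖ ∧ ‖k‖ ≤ b}

/-- The soft-photon velocity field
`Σ_v(k) = (2 / (|k|² (1 − (k/|k|)·v))) • (v − ((k·v)/|k|²) k)`. -/
def Sig (v k : E3) : E3 :=
  (2 / (‖k‖ ^ 2 * (1 - ⟪k, v⟫ / ‖k‖))) • (v - (⟪k, v⟫ / ‖k‖ ^ 2) • k)

open Metric Set Filter
open scoped NNReal

/-!
`Σ_v` is homogeneous of degree `-2` and the phase `k·u - |k|` of degree `1`, so scaling gives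
`∫_{|k| ≤ r} Σ_v(k)_l cos(s (k·u - |k|)) dk = r J(r s)` for the profile
`J(t) = ∫_{|x| ≤ 1} Σ_v(x)_l cos(t (x·u - |x|)) dx`, and the integral over `A(σ, b)` is
`b J(b s) - σ J(σ s)`. `J` is bounded since `|Σ_v(k)| ≲ |k|⁻²` is integrable near `0` in ℝ³.
The oscillation is captured by a bound on `τ J'(τ)`: `r ↦ r J(r)` is the integral over the ball
of radius `r`, so it is Lipschitz because `∫_{A(a,b)} |k|⁻² dk = 4π (b - a)`; hence
`J(τ) + τ J'(τ)` and then `τ J'(τ)` are bounded. With `b = s^(-θ)`, the chain rule turns each of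
these bounds into one of order `s^(-(1+θ))`.
-/

lemma abs_mul_deriv_le_of_lipschitzOnWith {J : ℝ → ℝ} {J' A τ : ℝ} {L : ℝ≥0}
    (hJ : HasDerivAt J J' τ) (hA : |J τ| ≤ A)
    (hL : LipschitzOnWith L (fun r => r * J r) (Ioi 0)) (hτ : 0 < τ) :
    |τ * J'| ≤ L + A := by
  have hQ : HasDerivAt (fun r => r * J r) (J τ + τ * J') τ := by
    simpa using (hasDerivAt_id τ).fun_mul hJ
  have hQ_le : |J τ + τ * J'| ≤ L := by
    simpa [hQ.deriv] using norm_deriv_le_of_lipschitzOn (Ioi_mem_nhds hτ) hL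
  calc |τ * J'| = |(J τ + τ * J') - J τ| := by ring_nf
    _ ≤ |J τ + τ * J'| + |J τ| := abs_sub _ _
    _ ≤ L + A := add_le_add hQ_le hA

lemma rpow_neg_mul_inv {s : ℝ} (hs : 0 < s) (θ : ℝ) : s ^ (-θ) * s⁻¹ = s ^ (-(1 + θ)) := by
  rw [← Real.rpow_neg_one, ← Real.rpow_add hs]
  ring_nf

section Cutoff

variable {J J' : ℝ → ℝ} {K θ s : ℝ}

lemma exists_hasDerivAt_const_mul_comp (hJ : ∀ t, HasDerivAt J (J' t) t)
    (hK : ∀ τ > 0, |τ * J' τ| ≤ K) (hs : 0 < s) {σ : ℝ} (hσ : 0 < σ) (hσs : σ < s ^ (-θ)) :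
    ∃ d, HasDerivAt (fun s => σ * J (σ * s)) d s ∧ |d| ≤ K * s ^ (-(1 + θ)) := by
  refine ⟨_, (((hJ _).comp s ((hasDerivAt_id s).const_mul σ)).const_mul σ), ?_⟩
  calc |σ * (J' (σ * id s) * (σ * 1))| = σ * s⁻¹ * |σ * s * J' (σ * s)| := by
        rw [id, mul_one, abs_mul, abs_mul, abs_mul, abs_of_pos hσ, abs_of_pos (mul_pos hσ hs)]
        field_simp
    _ ≤ s ^ (-θ) * s⁻¹ * K := by gcongr; exact hK _ (by positivity)
    _ = K * s ^ (-(1 + θ)) := by rw [rpow_neg_mul_inv hs, mul_comm]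

lemma exists_hasDerivAt_rpow_mul_comp {A : ℝ} (hJ : ∀ t, HasDerivAt J (J' t) t)
    (hA : ∀ t, |J t| ≤ A) (hK : ∀ τ > 0, |τ * J' τ| ≤ K) (hs : 0 < s) :
    ∃ d, HasDerivAt (fun s => s ^ (-θ) * J (s ^ (-θ) * s)) d s ∧
      |d| ≤ (|θ| * A + |1 - θ| * K) * s ^ (-(1 + θ)) := by
  have hb : HasDerivAt (fun s : ℝ => s ^ (-θ)) (-θ * s ^ (-θ - 1)) s :=
    Real.hasDerivAt_rpow_const (Or.inl hs.ne')
  have hbs : HasDerivAt (fun s : ℝ => s ^ (-θ) * s) ((1 - θ) * s ^ (-θ)) s := by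
    refine (hb.fun_mul (hasDerivAt_id' s)).congr_deriv ?_
    rw [Real.rpow_sub_one hs.ne']
    field_simp
    ring
  refine ⟨_, hb.mul ((hJ _).comp s hbs), ?_⟩
  have hpow : s ^ (-θ - 1) = s ^ (-(1 + θ)) := by ring_nf
  have hτ : 0 < s ^ (-θ) * s := by positivity
  have hsplit : s ^ (-θ) * (J' (s ^ (-θ) * s) * ((1 - θ) * s ^ (-θ))) =
      (1 - θ) * (s ^ (-θ) * s⁻¹) * (s ^ (-θ) * s * J' (s ^ (-θ) * s)) := by
    field_simp
  rw [hsplit, rpow_neg_mul_inv hs, hpow]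
  calc |-θ * s ^ (-(1 + θ)) * J (s ^ (-θ) * s) +
        (1 - θ) * s ^ (-(1 + θ)) * (s ^ (-θ) * s * J' (s ^ (-θ) * s))|
      ≤ |θ| * s ^ (-(1 + θ)) * |J (s ^ (-θ) * s)| +
        |1 - θ| * s ^ (-(1 + θ)) * |s ^ (-θ) * s * J' (s ^ (-θ) * s)| := by
        refine (abs_add_le _ _).trans_eq ?_
        simp only [abs_mul, abs_neg, abs_of_pos (Real.rpow_pos_of_pos hs _)]
    _ ≤ |θ| * s ^ (-(1 + θ)) * A + |1 - θ| * s ^ (-(1 + θ)) * K := by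
        gcongr
        exacts [hA _, hK _ hτ]
    _ = (|θ| * A + |1 - θ| * K) * s ^ (-(1 + θ)) := by ring

end Cutoff

lemma Sig_smul (v x : E3) {r : ℝ} (hr : 0 < r) : Sig v (r • x) = (r ^ 2)⁻¹ • Sig v x := by
  rcases eq_or_ne x 0 with rfl | hx
  · simp [Sig]
  have hx : ‖x‖ ≠ 0 := norm_ne_zero_iff.2 hx
  simp only [Sig, norm_smul, Real.norm_of_nonneg hr.le, real_inner_smul_left, smul_smul]
  congr 1
  · field_simp
  · congr 2
    field_simp

lemma norm_Sig_le {ν : ℝ} (hν : ν < 1) {v : E3} (hv : ‖v‖ ≤ ν) (x : E3) :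
    ‖Sig v x‖ ≤ 4 / (1 - ν) * (‖x‖ ^ 2)⁻¹ := by
  rcases eq_or_ne x 0 with rfl | hx
  · simp [Sig]
  have hx : 0 < ‖x‖ := norm_pos_iff.2 hx
  have hinner : |⟪x, v⟫| ≤ ‖x‖ * ν :=
    (abs_real_inner_le_norm x v).trans (mul_le_mul_of_nonneg_left hv hx.le)
  have hden : (1 - ν) * ‖x‖ ^ 2 ≤ ‖x‖ ^ 2 * (1 - ⟪x, v⟫ / ‖x‖) := by
    have : ⟪x, v⟫ / ‖x‖ ≤ ν := by
      rw [div_le_iff₀ hx]; linarith [le_abs_self ⟪x, v⟫]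
    nlinarith
  have hperp : ‖v - (⟪x, v⟫ / ‖x‖ ^ 2) • x‖ ≤ 2 := by
    calc ‖v - (⟪x, v⟫ / ‖x‖ ^ 2) • x‖ ≤ ‖v‖ + |⟪x, v⟫| / ‖x‖ ^ 2 * ‖x‖ := by
          refine (norm_sub_le _ _).trans_eq ?_
          rw [norm_smul, Real.norm_eq_abs, abs_div, abs_of_nonneg (sq_nonneg ‖x‖)]
      _ ≤ ν + ‖x‖ * ν / ‖x‖ ^ 2 * ‖x‖ := by gcongr
      _ ≤ 2 := by field_simp; linarith
  have hpos : 0 < (1 - ν) * ‖x‖ ^ 2 := by have := sub_pos.2 hν; positivity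
  calc ‖Sig v x‖ = 2 / (‖x‖ ^ 2 * (1 - ⟪x, v⟫ / ‖x‖)) * ‖v - (⟪x, v⟫ / ‖x‖ ^ 2) • x‖ := by
        rw [Sig, norm_smul, Real.norm_of_nonneg (div_nonneg zero_le_two (hpos.trans_le hden).le)]
    _ ≤ 2 / ((1 - ν) * ‖x‖ ^ 2) * 2 := by gcongr
    _ = 4 / (1 - ν) * (‖x‖ ^ 2)⁻¹ := by field_simp; ring

def phase (u k : E3) : ℝ := ⟪k, u⟫ - ‖k‖

lemma phase_smul (u x : E3) {r : ℝ} (hr : 0 ≤ r) : phase u (r • x) = r * phase u x := by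
  simp only [phase, real_inner_smul_left, norm_smul, Real.norm_of_nonneg hr]
  ring

lemma abs_phase_le {u : E3} (hu : ‖u‖ ≤ 1) (x : E3) : |phase u x| ≤ 2 * ‖x‖ := by
  have := (abs_real_inner_le_norm x u).trans (mul_le_of_le_one_right (norm_nonneg x) hu)
  rw [phase]
  exact (abs_sub _ _).trans (by rw [abs_norm]; linarith)

@[fun_prop]
lemma continuous_phase (u : E3) : Continuous (phase u) := by
  unfold phase; fun_prop

section AddHaar

variable {E : Type*} [NormedAddCommGroup E] [NormedSpace ℝ E] [FiniteDimensional ℝ E]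
  [MeasurableSpace E] [BorelSpace E] (μ : Measure E) [μ.IsAddHaarMeasure]

lemma ball_ae_eq_closedBall [Nontrivial E] (x : E) (r : ℝ) : ball x r =ᵐ[μ] closedBall x r := by
  rw [ae_eq_set, sdiff_eq_empty.2 ball_subset_closedBall, closedBall_sdiff_ball]
  exact ⟨measure_empty, Measure.addHaar_sphere μ x r⟩

lemma integrableOn_closedBall_of_norm_le_rpow {F : Type*} [NormedAddCommGroup F]
    (hd : 1 ≤ Module.finrank ℝ E) {f : E → F} {C α : ℝ} (hα : α < Module.finrank ℝ E)
    (hf : AEStronglyMeasurable f μ) (hle : ∀ x, ‖f x‖ ≤ C * ‖x‖ ^ (-α)) (R : ℝ) :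
    IntegrableOn f (closedBall 0 R) μ :=
  (integrableOn_ball_of_norm_le_rpow hd hα (.of_forall hle) hf).mono_set
    (closedBall_subset_ball (lt_add_one R))

end AddHaar

lemma measurableSet_annulus (a b : ℝ) : MeasurableSet (annulus a b) :=
  ((isClosed_le continuous_const continuous_norm).inter
    (isClosed_le continuous_norm continuous_const)).measurableSet

lemma integral_annulus_inv_sq {a b : ℝ} (ha : 0 < a) (hab : a ≤ b) :
    ∫ x in annulus a b, (‖x‖ ^ 2)⁻¹ = 3 * volume.real (ball (0 : E3) 1) * (b - a) := by
  have hind : (annulus a b).indicator (fun x : E3 => (‖x‖ ^ 2)⁻¹) =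
      fun x => (Icc a b).indicator (fun r : ℝ => (r ^ 2)⁻¹) ‖x‖ := by
    ext x
    by_cases hx : x ∈ annulus a b
    · rw [indicator_of_mem hx, indicator_of_mem (show ‖x‖ ∈ Icc a b from hx)]
    · rw [indicator_of_notMem hx, indicator_of_notMem (show ‖x‖ ∉ Icc a b from hx)]
  have hpos : Icc a b ⊆ Ioi 0 := fun r hr => ha.trans_le hr.1
  have hradial : EqOn (fun r : ℝ => r ^ (Module.finrank ℝ E3 - 1) • (Icc a b).indicator
      (fun r : ℝ => (r ^ 2)⁻¹) r) ((Icc a b).indicator 1) (Ioi 0) := by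
    intro r hr
    by_cases h : r ∈ Icc a b
    · simp [indicator_of_mem h, (show r ≠ 0 from ne_of_gt hr)]
    · simp [indicator_of_notMem h]
  rw [← integral_indicator (measurableSet_annulus a b), hind,
    integral_fun_norm_addHaar, setIntegral_congr_fun measurableSet_Ioi hradial,
    integral_indicator_one measurableSet_Icc]
  rw [measureReal_restrict_apply measurableSet_Icc, inter_eq_left.2 hpos,
    Real.volume_real_Icc_of_le hab, finrank_euclideanSpace_fin, nsmul_eq_mul, smul_eq_mul]
  push_cast
  ring

lemma integrableOn_inv_norm_sq (R : ℝ) :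
    IntegrableOn (fun x : E3 => (‖x‖ ^ 2)⁻¹) (closedBall 0 R) :=
  integrableOn_closedBall_of_norm_le_rpow volume (by simp) (C := 1) (α := 2) (by norm_num)
    (by fun_prop) (fun x => by simp [Real.rpow_neg (norm_nonneg x)]) R

lemma integrableOn_inv_norm (R : ℝ) : IntegrableOn (fun x : E3 => ‖x‖⁻¹) (closedBall 0 R) :=
  integrableOn_closedBall_of_norm_le_rpow volume (by simp) (C := 1) (α := 1) (by norm_num)
    (by fun_prop) (fun x => by simp [Real.rpow_neg_one]) R

def profile (u v : E3) (l : Fin 3) (t : ℝ) : ℝ :=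
  ∫ x in closedBall (0 : E3) 1, Sig v x l * Real.cos (phase u x * t)

def profileDeriv (u v : E3) (l : Fin 3) (t : ℝ) : ℝ :=
  ∫ x in closedBall (0 : E3) 1, Sig v x l * (-Real.sin (phase u x * t) * phase u x)

lemma setIntegral_closedBall_eq_mul_profile (u v : E3) (l : Fin 3) {r : ℝ} (hr : 0 < r)
    (t : ℝ) :
    ∫ k in closedBall (0 : E3) r, Sig v k l * Real.cos (phase u k * t) =
      r * profile u v l (r * t) := by
  have h := Measure.setIntegral_comp_smul_of_pos volume
    (fun k : E3 => Sig v k l * Real.cos (phase u k * t)) (closedBall 0 1) hr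
  rw [smul_unitClosedBall_of_nonneg hr.le, finrank_euclideanSpace_fin] at h
  simp only [Sig_smul v _ hr, phase_smul u _ hr.le, PiLp.smul_apply, smul_eq_mul,
    mul_comm r, mul_assoc] at h
  rw [integral_const_mul, inv_mul_eq_iff_eq_mul₀ (by positivity)] at h
  rw [profile, mul_comm r t, h]
  generalize ∫ k in closedBall (0 : E3) r, Sig v k l * Real.cos (phase u k * t) = I
  field_simp

section Profile

variable {ν : ℝ} {u v : E3}

lemma abs_Sig_apply_le (hν : ν < 1) (hv : ‖v‖ ≤ ν) (x : E3) (l : Fin 3) :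
    |Sig v x l| ≤ 4 / (1 - ν) * (‖x‖ ^ 2)⁻¹ :=
  (PiLp.norm_apply_le _ _).trans (norm_Sig_le hν hv x)

lemma abs_Sig_apply_mul_le (hν : ν < 1) (hv : ‖v‖ ≤ ν) (x : E3) (l : Fin 3) {c : ℝ}
    (hc : |c| ≤ 1) : |Sig v x l * c| ≤ 4 / (1 - ν) * (‖x‖ ^ 2)⁻¹ := by
  rw [abs_mul]
  exact mul_le_of_le_one_right (abs_nonneg _) hc |>.trans (abs_Sig_apply_le hν hv x l)

lemma abs_Sig_apply_mul_phase_le (hν : ν < 1) (hu : ‖u‖ ≤ 1) (hv : ‖v‖ ≤ ν) (x : E3)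
    (l : Fin 3) {c : ℝ} (hc : |c| ≤ 1) :
    |Sig v x l * (c * phase u x)| ≤ 2 * (4 / (1 - ν)) * ‖x‖⁻¹ := by
  rcases eq_or_ne x 0 with rfl | hx
  · simp [phase]
  have hx : 0 < ‖x‖ := norm_pos_iff.2 hx
  calc |Sig v x l * (c * phase u x)| ≤ 4 / (1 - ν) * (‖x‖ ^ 2)⁻¹ * (1 * (2 * ‖x‖)) := by
        rw [abs_mul, abs_mul]
        gcongr
        exacts [abs_Sig_apply_le hν hv x l, abs_phase_le hu x]
    _ = 2 * (4 / (1 - ν)) * ‖x‖⁻¹ := by field_simp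

lemma integrableOn_Sig_apply_mul (hν : ν < 1) (hv : ‖v‖ ≤ ν) (l : Fin 3) {c : E3 → ℝ}
    (hc_meas : Measurable c) (hc : ∀ x, |c x| ≤ 1) (R : ℝ) :
    IntegrableOn (fun x => Sig v x l * c x) (closedBall 0 R) :=
  ((integrableOn_inv_norm_sq R).const_mul _).mono' (by fun_prop)
    (.of_forall fun x => abs_Sig_apply_mul_le hν hv x l (hc x))

lemma abs_setIntegral_Sig_apply_mul_le (hν : ν < 1) (hv : ‖v‖ ≤ ν) (l : Fin 3) {c : E3 → ℝ}
    (hc : ∀ x, |c x| ≤ 1) {s : Set E3} (hs : IntegrableOn (fun x : E3 => (‖x‖ ^ 2)⁻¹) s) :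
    |∫ x in s, Sig v x l * c x| ≤ 4 / (1 - ν) * ∫ x in s, (‖x‖ ^ 2)⁻¹ := by
  rw [← integral_const_mul, ← Real.norm_eq_abs]
  exact norm_integral_le_of_norm_le (hs.const_mul _)
    (.of_forall fun x => abs_Sig_apply_mul_le hν hv x l (hc x))

lemma hasDerivAt_profile (hν : ν < 1) (hu : ‖u‖ ≤ 1) (hv : ‖v‖ ≤ ν) (l : Fin 3) (t : ℝ) :
    HasDerivAt (profile u v l) (profileDeriv u v l t) t := by
  have hint : ∀ t', IntegrableOn (fun x => Sig v x l * Real.cos (phase u x * t'))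
      (closedBall 0 1) := fun t' =>
    integrableOn_Sig_apply_mul hν hv l (by fun_prop) (fun _ => Real.abs_cos_le_one _) 1
  refine (hasDerivAt_integral_of_dominated_loc_of_deriv_le
    (F' := fun t' x => Sig v x l * (-Real.sin (phase u x * t') * phase u x))
    (bound := fun x => 2 * (4 / (1 - ν)) * ‖x‖⁻¹) univ_mem
    (.of_forall fun t' => (hint t').aestronglyMeasurable) (hint t) (by fun_prop)
    (.of_forall fun x t' _ => abs_Sig_apply_mul_phase_le hν hu hv x l
      (by simpa using Real.abs_sin_le_one _))
    ((integrableOn_inv_norm 1).const_mul _) (.of_forall fun x t' _ => ?_)).2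
  exact ((Real.hasDerivAt_cos _).comp t' ((hasDerivAt_id t').const_mul _)).const_mul _
    |>.congr_deriv (by simp)

lemma abs_profile_le (hν : ν < 1) (hv : ‖v‖ ≤ ν) (l : Fin 3) (t : ℝ) :
    |profile u v l t| ≤ 4 / (1 - ν) * ∫ x in closedBall (0 : E3) 1, (‖x‖ ^ 2)⁻¹ :=
  abs_setIntegral_Sig_apply_mul_le hν hv l (fun _ => Real.abs_cos_le_one _)
    (integrableOn_inv_norm_sq 1)

lemma abs_sub_mul_profile_le (hν : ν < 1) (hv : ‖v‖ ≤ ν) (l : Fin 3) {a b : ℝ} (ha : 0 < a)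
    (hab : a ≤ b) :
    |b * profile u v l b - a * profile u v l a| ≤
      4 / (1 - ν) * (3 * volume.real (ball (0 : E3) 1)) * (b - a) := by
  have hball (r : ℝ) (hr : 0 < r) := setIntegral_closedBall_eq_mul_profile u v l hr 1
  simp only [mul_one] at hball
  have hsub : closedBall (0 : E3) b \ closedBall 0 a ⊆ annulus a b := fun x hx => by
    simp only [Set.mem_sdiff, mem_closedBall_zero_iff, not_le] at hx
    exact ⟨hx.2.le, hx.1⟩
  have hint : IntegrableOn (fun x : E3 => (‖x‖ ^ 2)⁻¹) (annulus a b) :=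
    (integrableOn_inv_norm_sq b).mono_set fun x hx => mem_closedBall_zero_iff.2 hx.2
  rw [← hball b (ha.trans_le hab), ← hball a ha, ← setIntegral_sdiff measurableSet_closedBall
    (integrableOn_Sig_apply_mul hν hv l (by fun_prop) (fun _ => Real.abs_cos_le_one _) b)
    (closedBall_subset_closedBall hab), mul_assoc, ← integral_annulus_inv_sq ha hab]
  refine (abs_setIntegral_Sig_apply_mul_le hν hv l (fun _ => Real.abs_cos_le_one _)
    (hint.mono_set hsub)).trans ?_
  exact mul_le_mul_of_nonneg_left
    (setIntegral_mono_set hint (.of_forall fun x => by positivity) (.of_forall hsub))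
    (div_nonneg zero_le_four (sub_pos.2 hν).le)

lemma lipschitzOnWith_mul_profile (hν : ν < 1) (hv : ‖v‖ ≤ ν) (l : Fin 3) :
    LipschitzOnWith (4 / (1 - ν) * (3 * volume.real (ball (0 : E3) 1))).toNNReal
      (fun r => r * profile u v l r) (Ioi 0) := by
  refine LipschitzOnWith.of_dist_le' fun a ha b hb => ?_
  rw [Real.dist_eq, Real.dist_eq]
  rcases le_total a b with hab | hba
  · rw [abs_sub_comm, abs_sub_comm a, abs_of_nonneg (sub_nonneg.2 hab)]
    exact abs_sub_mul_profile_le hν hv l ha hab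
  · rw [abs_of_nonneg (sub_nonneg.2 hba)]
    exact abs_sub_mul_profile_le hν hv l hb hba

lemma abs_mul_profileDeriv_le (hν : ν < 1) (hu : ‖u‖ ≤ 1) (hv : ‖v‖ ≤ ν) (l : Fin 3) {τ : ℝ}
    (hτ : 0 < τ) :
    |τ * profileDeriv u v l τ| ≤ 4 / (1 - ν) * (3 * volume.real (ball (0 : E3) 1)) +
      4 / (1 - ν) * ∫ x in closedBall (0 : E3) 1, (‖x‖ ^ 2)⁻¹ := by
  have h := abs_mul_deriv_le_of_lipschitzOnWith (hasDerivAt_profile hν hu hv l τ)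
    (abs_profile_le hν hv l τ) (lipschitzOnWith_mul_profile hν hv l) hτ
  rwa [Real.coe_toNNReal _ (by positivity)] at h

lemma setIntegral_annulus_eq_sub (hν : ν < 1) (hv : ‖v‖ ≤ ν) (l : Fin 3) {σ b : ℝ}
    (hσ : 0 < σ) (hσb : σ ≤ b) (t : ℝ) :
    ∫ k in annulus σ b, Sig v k l * Real.cos (⟪k, u⟫ * t - ‖k‖ * t) =
      b * profile u v l (b * t) - σ * profile u v l (σ * t) := by
  have hann : annulus σ b = closedBall 0 b \ ball 0 σ := by
    ext k
    simp [annulus, and_comm]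
  simp only [← sub_mul]
  rw [hann, setIntegral_sdiff measurableSet_ball
      (integrableOn_Sig_apply_mul hν hv l (by fun_prop) (fun _ => Real.abs_cos_le_one _) b)
      (ball_subset_closedBall.trans (closedBall_subset_closedBall hσb)),
    setIntegral_congr_set (ball_ae_eq_closedBall volume 0 σ)]
  exact congr_arg₂ _ (setIntegral_closedBall_eq_mul_profile u v l (hσ.trans_le hσb) t)
    (setIntegral_closedBall_eq_mul_profile u v l hσ t)

end Profile

theorem statement4_general (θ ν : ℝ) (hν1 : ν < 1) :
    ∃ C : ℝ, ∀ u v : E3, ‖u‖ ≤ ν → ‖v‖ ≤ ν → ∀ σ : ℝ, 0 < σ → ∀ l : Fin 3,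
      ∀ s : ℝ, 1 ≤ s → σ < s ^ (-θ) →
      ∃ d : ℝ,
        HasDerivAt (fun s' : ℝ => ∫ k in annulus σ (s' ^ (-θ)),
            (Sig v k) l * Real.cos (⟪k, u⟫ * s' - ‖k‖ * s')) d s ∧
        |d| ≤ C * s ^ (-(1 + θ)) := by
  set A := 4 / (1 - ν) * ∫ x in closedBall (0 : E3) 1, (‖x‖ ^ 2)⁻¹
  set K := 4 / (1 - ν) * (3 * volume.real (ball (0 : E3) 1)) + A
  refine ⟨|θ| * A + |1 - θ| * K + K, fun u v hu hv σ hσ l s hs hσs => ?_⟩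
  have hs0 : 0 < s := one_pos.trans_le hs
  have hu1 : ‖u‖ ≤ 1 := hu.trans hν1.le
  have hJ := hasDerivAt_profile hν1 hu1 hv l
  have hK : ∀ τ > 0, |τ * profileDeriv u v l τ| ≤ K := fun τ hτ =>
    abs_mul_profileDeriv_le hν1 hu1 hv l hτ
  obtain ⟨d₁, hd₁, hd₁_le⟩ :=
    exists_hasDerivAt_rpow_mul_comp (θ := θ) hJ (abs_profile_le hν1 hv l) hK hs0
  obtain ⟨d₂, hd₂, hd₂_le⟩ := exists_hasDerivAt_const_mul_comp hJ hK hs0 hσ hσs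
  refine ⟨d₁ - d₂, (hd₁.sub hd₂).congr_of_eventuallyEq ?_, ?_⟩
  · filter_upwards [(Real.continuousAt_rpow_const s (-θ) (Or.inl hs0.ne')).eventually
      (eventually_gt_nhds hσs)] with z hσz
    exact setIntegral_annulus_eq_sub hν1 hv l hσ hσz.le z
  · calc |d₁ - d₂| ≤ |d₁| + |d₂| := abs_sub _ _
      _ ≤ (|θ| * A + |1 - θ| * K) * s ^ (-(1 + θ)) + K * s ^ (-(1 + θ)) :=
        add_le_add hd₁_le hd₂_le
      _ = (|θ| * A + |1 - θ| * K + K) * s ^ (-(1 + θ)) := by ring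

/-- Estimate (A.12): the derivative in `s` of the infrared-tail integrand, with moving
upper cutoff `s^{-θ}`, is of order `s^{-(1+θ)}`. -/
theorem statement4 (θ ν : ℝ) (hθ0 : 0 < θ) (hθ1 : θ < 1) (hν0 : 0 < ν) (hν1 : ν < 1) :
    ∃ C : ℝ, ∀ u v : E3, ‖u‖ ≤ ν → ‖v‖ ≤ ν → ∀ σ : ℝ, 0 < σ → ∀ l : Fin 3,
      ∀ s : ℝ, 1 ≤ s → σ < s ^ (-θ) →
      ∃ d : ℝ,
        HasDerivAt (fun s' : ℝ => ∫ k in annulus σ (s' ^ (-θ)),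
            (Sig v k) l * Real.cos (⟪k, u⟫ * s' - ‖k‖ * s')) d s ∧
        |d| ≤ C * s ^ (-(1 + θ)) :=
  statement4_general θ ν hν1
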